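/- Define the monomial basis (M_σ) of ℤS by σ = Σ_{σ ≤ w} M_w (Möbius inversion over the right weak order). Then the coproduct δ of the Malvenuto–Reutenauer Hopf algebra satisfies δ(M_σ) = Σ_{σ = v △ u} M_u ⊗ M_v, the sum over all factorizations of σ as a left shifted concatenation. -/

import Mathlib

/-- Standardization (0-based): replace each letter by its rank among the letters of `w`. -/
def stW (w : List ℕ) : List ℕ := w.map (fun x => (w.filter (· < x)).length)

/-- `w` is the one-line word of a permutation of `{0, …, n-1}` where `n = w.length`. -/
def IsPermWord (w : List ℕ) : Prop := w.Perm (List.range w.length)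

/-- The inversion set of a word: pairs `(j, i)` with `j > i` and `j` to the left of `i`. -/
def invSet (w : List ℕ) : Set (ℕ × ℕ) :=
  {p | p.2 < p.1 ∧ ∃ k l : ℕ, k < l ∧ w[k]? = some p.1 ∧ w[l]? = some p.2}

/-- The right weak order: inclusion of inversion sets. -/
def weakLe (u v : List ℕ) : Prop := invSet u ⊆ invSet v

/-- Left shifted concatenation `v △ u`: the word `v̄ u`, `v̄` being `v` shifted by `|u|`. -/
def triangle (v u : List ℕ) : List ℕ := v.map (· + u.length) ++ u

/-- Right shifted concatenation `u □ v`: the word `u v̄`, `v̄` being `v` shifted by `|u|`. -/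
def squareC (u v : List ℕ) : List ℕ := u ++ v.map (· + u.length)

lemma nodup_of_isPermWord {w : List ℕ} (h : IsPermWord w) : w.Nodup :=
  h.nodup_iff.mpr (List.nodup_range)

/-- Standardizing a word with distinct letters yields a permutation word. -/
lemma isPermWord_stW {w : List ℕ} (h : w.Nodup) : IsPermWord (stW w) := by
  show (stW w).Perm (List.range (stW w).length)
  classical
  set f : ℕ → ℕ := fun x => (w.filter (· < x)).length with hf
  have hcard : ∀ x, f x = (w.toFinset.filter (· < x)).card := by
    intro x
    rw [hf]
    simp only
    rw [← List.toFinset_card_of_nodup (h.filter _)]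
    congr 1
    ext z
    simp [List.mem_filter]
  have hmono : ∀ x ∈ w, ∀ y ∈ w, x < y → f x < f y := by
    intro x hx y hy hxy
    rw [hcard, hcard]
    apply Finset.card_lt_card
    constructor
    · intro z hz
      simp only [Finset.mem_filter, decide_eq_true_eq] at hz ⊢
      exact ⟨hz.1, lt_trans hz.2 hxy⟩
    · intro hcon
      have hxmem : x ∈ w.toFinset.filter (· < y) := by
        simp only [Finset.mem_filter, decide_eq_true_eq]
        exact ⟨List.mem_toFinset.2 hx, hxy⟩
      have := hcon hxmem
      simp only [Finset.mem_filter, decide_eq_true_eq] at this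
      exact lt_irrefl x this.2
  have hinj : ∀ x ∈ w, ∀ y ∈ w, f x = f y → x = y := by
    intro x hx y hy hxy
    rcases lt_trichotomy x y with h1 | h1 | h1
    · exact absurd hxy (Nat.ne_of_lt (hmono x hx y hy h1))
    · exact h1
    · exact absurd hxy.symm (Nat.ne_of_lt (hmono y hy x hx h1))
  have hltn : ∀ x ∈ w, f x < w.length := by
    intro x hx
    rw [hf]
    simp only
    refine List.length_filter_lt_length_iff_exists.2 ⟨x, hx, by simp⟩
  have hnodup : (stW w).Nodup := List.Nodup.map_on hinj h
  have hlen : (stW w).length = w.length := by simp [stW]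
  rw [hlen]
  refine (List.perm_ext_iff_of_nodup hnodup (List.nodup_range)).2 ?_
  intro k
  simp only [List.mem_range]
  constructor
  · rintro hk
    simp only [stW, List.mem_map] at hk
    obtain ⟨x, hx, rfl⟩ := hk
    exact hltn x hx
  · intro hk
    -- surjectivity via cardinality
    have himage : w.toFinset.image f = Finset.range w.length := by
      apply Finset.eq_of_subset_of_card_le
      · intro m hm
        simp only [Finset.mem_image, List.mem_toFinset] at hm
        obtain ⟨x, hx, rfl⟩ := hm
        exact Finset.mem_range.2 (hltn x hx)
      · rw [Finset.card_range, Finset.card_image_of_injOn ?_]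
        · rw [List.toFinset_card_of_nodup h]
        · intro x hx y hy
          exact hinj x (List.mem_toFinset.1 hx) y (List.mem_toFinset.1 hy)
    have : k ∈ w.toFinset.image f := by rw [himage]; exact Finset.mem_range.2 hk
    simp only [Finset.mem_image, List.mem_toFinset] at this
    obtain ⟨x, hx, rfl⟩ := this
    simp only [stW, List.mem_map]
    exact ⟨x, hx, rfl⟩

lemma isPermWord_stW_filter {w : List ℕ} (h : IsPermWord w)
    (p : ℕ → Bool) : IsPermWord (stW (w.filter p)) :=
  isPermWord_stW ((nodup_of_isPermWord h).filter _)

lemma isPermWord_filter_lt {w : List ℕ} (h : IsPermWord w) (i : ℕ) :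
    IsPermWord (w.filter (· < i)) := by
  have h1 : (w.filter (· < i)).Perm ((List.range w.length).filter (· < i)) := h.filter _
  have h2 : ((List.range w.length).filter (· < i)).Perm (List.range (min i w.length)) := by
    refine (List.perm_ext_iff_of_nodup ((List.nodup_range).filter _) (List.nodup_range)).2 ?_
    intro x
    simp only [List.mem_filter, List.mem_range, decide_eq_true_eq, lt_min_iff]
    tauto
  have h3 := h1.trans h2
  have hl : (w.filter (· < i)).length = min i w.length := by simpa using h3.length_eq
  unfold IsPermWord
  rw [hl]; exact h3

/-- The type of permutation words. -/
abbrev PW : Type := {w : List ℕ // IsPermWord w}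

/-- `ℤS`: the free `ℤ`-module on the set of all permutations. -/
abbrev ZS : Type := PW →₀ ℤ

open scoped TensorProduct

/-- The coproduct on a basis permutation:
`δ(σ) = Σ_{0 ≤ i ≤ n} σ|{1,…,i} ⊗ st(σ|{i+1,…,n})`. -/
noncomputable def deltaWord (w : PW) : ZS ⊗[ℤ] ZS :=
  ∑ i ∈ Finset.range (w.1.length + 1),
    Finsupp.single (⟨w.1.filter (· < i), isPermWord_filter_lt w.2 i⟩ : PW) (1 : ℤ) ⊗ₜ
      Finsupp.single
        (⟨stW (w.1.filter (fun x => i ≤ x)), isPermWord_stW_filter w.2 _⟩ : PW) (1 : ℤ)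

/-- The coproduct `δ` of the Malvenuto–Reutenauer Hopf algebra `ℤS`
(standardized unshuffling), as a `ℤ`-linear map. -/
noncomputable def Delta : ZS →ₗ[ℤ] ZS ⊗[ℤ] ZS :=
  Finsupp.lsum ℤ (fun w => LinearMap.toSpanSingleton ℤ _ (deltaWord w))

/-- The finite set of all permutation words of `{0,…,n-1}`. -/
def permsOf (n : ℕ) : Finset (List ℕ) := (List.range n).permutations.toFinset

/-! Applying `δ` to `σ = Σ_{σ ≤ w} M_w` and expanding both factors of every term
`σ|{1..i} ⊗ st(σ|{i+1..n})` of `δ(σ)` in the monomial basis gives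
`Σ_{σ ≤ w} δ(M_w) = Σ_{σ ≤ v △ u} M_u ⊗ M_v`: the inversions of `v △ u` are those of `u`,
those of the shifted `v`, and all pairs across the cut, so `σ ≤ v △ u` holds exactly when
`σ|{1..i} ≤ u` and `st(σ|{i+1..n}) ≤ v`. The right-hand side also equals
`Σ_{σ ≤ w} Σ_{w = v △ u} M_u ⊗ M_v`, so the two sides of the theorem have the same sums over
every upper interval of the weak order on `S_n`. That order is antisymmetric (a permutation is
determined by its inversion set), and on a locally finite poset these sums determine a function. -/
theorem Finset.eq_of_forall_sum_Ici_eq {α M : Type*} [PartialOrder α] [LocallyFiniteOrderTop α]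
    [AddCancelCommMonoid M] {f g : α → M}
    (h : ∀ a, ∑ b ∈ Ici a, f b = ∑ b ∈ Ici a, g b) (a : α) : f a = g a := by
  induction hn : (Ici a).card using Nat.strong_induction_on generalizing a with
  | _ n ih =>
    have hIoi : ∀ b ∈ Ioi a, f b = g b := fun b hb =>
      ih _ (hn ▸ card_lt_card (Ici_ssubset_Ici.2 (mem_Ioi.1 hb))) b rfl
    have ha := h a
    rw [← add_sum_Ioi_eq_sum_Ici, ← add_sum_Ioi_eq_sum_Ici, sum_congr rfl hIoi] at ha
    exact add_right_cancel ha

open List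

section InversionSet

variable {w : List ℕ} {a b x y : ℕ}

lemma mem_invSet_iff : (b, a) ∈ invSet w ↔ a < b ∧ [b, a] <+ w := by
  refine and_congr_right fun _ => ⟨?_, fun h => ?_⟩
  · rintro ⟨k, l, hkl, hk, hl⟩
    obtain ⟨hk', rfl⟩ := List.getElem?_eq_some_iff.1 hk
    obtain ⟨hl', rfl⟩ := List.getElem?_eq_some_iff.1 hl
    simpa using
      map_getElem_sublist (l := w) (is := [⟨k, hk'⟩, ⟨l, hl'⟩]) (by simpa using hkl)
  · obtain ⟨is, his, hlt⟩ := sublist_eq_map_getElem h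
    match is, his, hlt with
    | [k, l], his, hlt =>
      simp only [map_cons, map_nil, cons.injEq, and_true] at his
      exact ⟨k, l, by simpa using hlt, by simp [his.1], by simp [his.2]⟩

lemma pair_sublist_cons_iff {t : List ℕ} {c : ℕ} :
    [x, y] <+ c :: t ↔ (x = c ∧ y ∈ t) ∨ [x, y] <+ t := by
  rw [sublist_cons_iff, or_comm]
  refine or_congr_left ⟨?_, ?_⟩
  · rintro ⟨r, hr, hrt⟩
    obtain ⟨rfl, rfl⟩ := cons.inj hr
    exact ⟨rfl, singleton_sublist.1 hrt⟩
  · rintro ⟨rfl, hy⟩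
    exact ⟨[y], rfl, singleton_sublist.2 hy⟩

lemma List.Nodup.eq_of_pair_sublist_swap (hw : w.Nodup) (h₁ : [x, y] <+ w)
    (h₂ : [y, x] <+ w) : x = y := by
  induction w with
  | nil => simp at h₁
  | cons c t ih =>
    obtain ⟨hct, ht⟩ := nodup_cons.1 hw
    rcases pair_sublist_cons_iff.1 h₁ with ⟨rfl, -⟩ | h₁t <;>
      rcases pair_sublist_cons_iff.1 h₂ with ⟨rfl, -⟩ | h₂t
    · rfl
    · exact absurd (h₂t.subset (by simp : x ∈ [y, x])) hct
    · exact absurd (h₁t.subset (by simp : y ∈ [x, y])) hct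
    · exact ih ht h₁t h₂t

lemma mem_invSet_filter_iff {p : ℕ → Bool} :
    (b, a) ∈ invSet (w.filter p) ↔ (b, a) ∈ invSet w ∧ p b ∧ p a := by
  simp only [mem_invSet_iff, and_assoc]
  refine and_congr_right fun _ => ⟨fun h => ?_, fun ⟨h, hb, ha⟩ => ?_⟩
  · have hb := mem_filter.1 (h.subset (by simp : b ∈ [b, a]))
    have ha := mem_filter.1 (h.subset (by simp : a ∈ [b, a]))
    exact ⟨h.trans filter_sublist, hb.2, ha.2⟩
  · simpa [hb, ha] using h.filter p

lemma eq_of_perm_of_invSet_eq {u : List ℕ} (hp : u ~ w) (hu : u.Nodup)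
    (h : invSet u = invSet w) : u = w := by
  -- `before x y`: `x` precedes `y` in `u`, read off from `invSet u` alone.
  let before x y := if x < y then (y, x) ∉ invSet u else (x, y) ∈ invSet u
  have pairwise_before : ∀ l : List ℕ, l.Nodup → invSet l = invSet u → l.Pairwise before := by
    intro l hl hlu
    refine pairwise_iff_forall_sublist.2 fun {x y} hxy => ?_
    have hne : x ≠ y := by rintro rfl; exact nodup_iff_sublist.1 hl x hxy
    simp only [before, ← hlu, mem_invSet_iff]
    split_ifs with hlt
    · exact fun h => hne (hl.eq_of_pair_sublist_swap hxy h.2)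
    · exact ⟨by omega, hxy⟩
  refine hp.eq_of_pairwise (fun x y _ _ hxy hyx => ?_) (pairwise_before u hu rfl)
    (pairwise_before w (hp.nodup_iff.1 hu) h.symm)
  rcases lt_trichotomy x y with hlt | rfl | hlt
  · exact absurd (by simpa [before, hlt.not_gt] using hyx) (by simpa [before, hlt] using hxy)
  · rfl
  · exact absurd (by simpa [before, hlt.not_gt] using hxy) (by simpa [before, hlt] using hyx)

end InversionSet

section WeakOrder

variable {σ u v : List ℕ} {f : ℕ → ℕ} {i : ℕ}

lemma invSet_map (hf : StrictMono f) (w : List ℕ) :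
    invSet (w.map f) = Prod.map f f '' invSet w := by
  ext ⟨x, y⟩
  constructor
  · rw [mem_invSet_iff]
    rintro ⟨hyx, hs⟩
    obtain ⟨l, hl, hmap⟩ := sublist_map_iff.1 hs
    match l, hmap with
    | [b, a], hmap =>
      obtain ⟨rfl, rfl⟩ : f b = x ∧ f a = y := by simpa using hmap.symm
      exact ⟨(b, a), mem_invSet_iff.2 ⟨hf.lt_iff_lt.1 hyx, hl⟩, rfl⟩
  · rintro ⟨⟨b, a⟩, hba, he⟩
    obtain ⟨rfl, rfl⟩ := Prod.ext_iff.1 he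
    obtain ⟨hab, hs⟩ := mem_invSet_iff.1 hba
    exact mem_invSet_iff.2 ⟨hf hab, by simpa using hs.map f⟩

lemma weakLe_map_iff (hf : StrictMono f) : weakLe (u.map f) (v.map f) ↔ weakLe u v := by
  simp only [weakLe, invSet_map hf]
  exact Set.image_subset_image_iff (hf.injective.prodMap hf.injective)

lemma weakLe_append_iff {A B : List ℕ} (hA : ∀ x ∈ A, i ≤ x) (hB : ∀ x ∈ B, x < i)
    (hσ : ∀ x ∈ σ, x ∈ A ++ B) :
    weakLe σ (A ++ B) ↔ weakLe (σ.filter (· < i)) B ∧ weakLe (σ.filter (i ≤ ·)) A := by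
  have hlow : (A ++ B).filter (· < i) = B := by
    rw [filter_append, filter_eq_nil_iff.2 fun x hx => by simpa using hA x hx,
      filter_eq_self.2 fun x hx => by simpa using hB x hx, nil_append]
  have hhigh : (A ++ B).filter (i ≤ ·) = A := by
    rw [filter_append, filter_eq_self.2 fun x hx => by simpa using hA x hx,
      filter_eq_nil_iff.2 fun x hx => by simpa using hB x hx, append_nil]
  constructor
  · intro h
    refine ⟨fun ⟨b, a⟩ hba => ?_, fun ⟨b, a⟩ hba => ?_⟩
    · rw [mem_invSet_filter_iff] at hba
      rw [← hlow, mem_invSet_filter_iff]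
      exact ⟨h hba.1, hba.2⟩
    · rw [mem_invSet_filter_iff] at hba
      rw [← hhigh, mem_invSet_filter_iff]
      exact ⟨h hba.1, hba.2⟩
  · rintro ⟨hlo, hhi⟩ ⟨b, a⟩ hba
    obtain ⟨hab, hs⟩ := mem_invSet_iff.1 hba
    by_cases hb : b < i
    · have := hlo <| mem_invSet_filter_iff.2
        ⟨hba, by simpa using hb, by simpa using hab.trans hb⟩
      rw [← hlow, mem_invSet_filter_iff] at this
      exact this.1
    by_cases ha : i ≤ a
    · have := hhi <| mem_invSet_filter_iff.2
        ⟨hba, by simpa using ha.trans hab.le, by simpa using ha⟩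
      rw [← hhigh, mem_invSet_filter_iff] at this
      exact this.1
    have hbA : b ∈ A := (mem_append.1 (hσ b (hs.subset (by simp)))).resolve_right
      fun h => hb (hB b h)
    have haB : a ∈ B := (mem_append.1 (hσ a (hs.subset (by simp)))).resolve_left
      fun h => ha (hA a h)
    exact mem_invSet_iff.2 ⟨hab, (singleton_sublist.2 hbA).append (singleton_sublist.2 haB)⟩

end WeakOrder

section Standardization

variable {σ w : List ℕ} {n i : ℕ}

lemma stW_map_of_strictMono {f : ℕ → ℕ} (hf : StrictMono f) (w : List ℕ) :
    stW (w.map f) = stW w := by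
  simp only [stW, map_map]
  refine map_congr_left fun x _ => ?_
  simp [filter_map, Function.comp_def, hf.lt_iff_lt]

lemma filter_lt_perm_range (hw : w ~ range n) (hi : i ≤ n) : w.filter (· < i) ~ range i :=
  (perm_ext_iff_of_nodup ((hw.nodup_iff.2 nodup_range).filter _) nodup_range).2 fun x => by
    simp only [mem_filter, hw.mem_iff, mem_range, decide_eq_true_eq]
    omega

lemma stW_eq_self (hw : IsPermWord w) : stW w = w := by
  refine (map_congr_left fun x hx => ?_).trans (map_id w)
  have hx : x < w.length := by simpa using hw.mem_iff.1 hx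
  simpa using (filter_lt_perm_range hw hx.le).length_eq

lemma map_sub_filter_le_perm_range (hσ : IsPermWord σ) (i : ℕ) :
    (σ.filter (i ≤ ·)).map (· - i) ~ range (σ.length - i) := by
  have hnodup := (nodup_of_isPermWord hσ).filter (fun x => decide (i ≤ x))
  refine (perm_ext_iff_of_nodup (hnodup.map_on fun x hx y hy h => ?_) nodup_range).2 fun y => ?_
  · simp only [mem_filter, decide_eq_true_eq] at hx hy
    omega
  · simp only [mem_map, mem_filter, hσ.mem_iff, mem_range, decide_eq_true_eq]
    exact ⟨by rintro ⟨x, ⟨hx, hix⟩, rfl⟩; omega, fun hy => ⟨y + i, by omega, by omega⟩⟩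

lemma map_sub_map_add_filter_le (i : ℕ) (w : List ℕ) :
    ((w.filter (i ≤ ·)).map (· - i)).map (· + i) = w.filter (i ≤ ·) := by
  rw [map_map]
  refine (map_congr_left fun x hx => ?_).trans (map_id _)
  simp only [mem_filter, decide_eq_true_eq] at hx
  simp only [Function.comp_apply, id_eq]
  omega

lemma stW_filter_le (hσ : IsPermWord σ) (i : ℕ) :
    stW (σ.filter (i ≤ ·)) = (σ.filter (i ≤ ·)).map (· - i) := by
  have hperm := map_sub_filter_le_perm_range hσ i
  have hτ : IsPermWord ((σ.filter (i ≤ ·)).map (· - i)) := by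
    rwa [IsPermWord, hperm.length_eq, length_range]
  conv_lhs => rw [← map_sub_map_add_filter_le]
  rw [stW_map_of_strictMono (fun _ _ h => Nat.add_lt_add_right h i), stW_eq_self hτ]

end Standardization

lemma weakLe_triangle_iff {σ u v : List ℕ} {i : ℕ} (hσ : IsPermWord σ) (hu : u ~ range i)
    (hv : v ~ range (σ.length - i)) :
    weakLe σ (triangle v u) ↔
      weakLe (σ.filter (· < i)) u ∧ weakLe (stW (σ.filter (i ≤ ·))) v := by
  have hul : u.length = i := by simpa using hu.length_eq
  have hcover : ∀ x ∈ σ, x ∈ v.map (· + i) ++ u := by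
    intro x hx
    have hxn : x < σ.length := by simpa using hσ.mem_iff.1 hx
    by_cases hxi : x < i
    · exact mem_append_right _ (hu.mem_iff.2 (mem_range.2 hxi))
    · exact mem_append_left _
        (mem_map.2 ⟨x - i, hv.mem_iff.2 (mem_range.2 (by omega)), by omega⟩)
  rw [triangle, hul, stW_filter_le hσ i,
    weakLe_append_iff (i := i) (by simp) (fun x hx => by simpa using hu.subset hx) hcover]
  refine and_congr_right fun _ => ?_
  conv_rhs =>
    rw [← weakLe_map_iff (fun _ _ h => Nat.add_lt_add_right h i), map_sub_map_add_filter_le]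

lemma mem_permsOf {w : List ℕ} {n : ℕ} : w ∈ permsOf n ↔ w ~ range n := by
  rw [permsOf, mem_toFinset, mem_permutations]

lemma length_of_mem_permsOf {w : List ℕ} {n : ℕ} (h : w ∈ permsOf n) : w.length = n := by
  simpa using (mem_permsOf.1 h).length_eq

lemma isPermWord_of_mem_permsOf {w : List ℕ} {n : ℕ} (h : w ∈ permsOf n) : IsPermWord w := by
  rw [IsPermWord, length_of_mem_permsOf h]
  exact mem_permsOf.1 h

lemma triangle_mem_permsOf {u v : List ℕ} {i m : ℕ} (hu : u ∈ permsOf i) (hv : v ∈ permsOf m) :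
    triangle v u ∈ permsOf (i + m) := by
  rw [mem_permsOf, triangle, length_of_mem_permsOf hu, range_add]
  refine perm_append_comm.trans ((mem_permsOf.1 hu).append ?_)
  simpa only [Nat.add_comm i] using (mem_permsOf.1 hv).map (· + i)

def PermsOf (n : ℕ) : Type := {w : List ℕ // w ∈ permsOf n}

namespace PermsOf

variable {n : ℕ}

instance : Fintype (PermsOf n) := inferInstanceAs (Fintype {w : List ℕ // w ∈ permsOf n})

instance : PartialOrder (PermsOf n) where
  le u v := weakLe u.1 v.1
  le_refl _ := subset_rfl
  le_trans _ _ _ := Set.Subset.trans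
  le_antisymm u v huv hvu := Subtype.ext <| eq_of_perm_of_invSet_eq
    ((mem_permsOf.1 u.2).trans (mem_permsOf.1 v.2).symm)
    (nodup_of_isPermWord (isPermWord_of_mem_permsOf u.2)) (huv.antisymm hvu)

open scoped Classical in
noncomputable instance : LocallyFiniteOrderTop (PermsOf n) :=
  LocallyFiniteOrderTop.ofIci' _ (fun a => {b | a ≤ b}) fun _ _ => by simp

open scoped Classical in
lemma sum_Ici {X : Type*} [AddCommMonoid X] (a : PermsOf n) (F : List ℕ → X) :
    ∑ b ∈ Finset.Ici a, F b.1 = ∑ w ∈ permsOf n, if weakLe a.1 w then F w else 0 := by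
  rw [← Finset.sum_coe_sort (permsOf n), ← Finset.sum_filter]
  rfl

end PermsOf

section MonomialBasis

open scoped Classical

def IsMonomialBasis (M : List ℕ → ZS) : Prop :=
  ∀ σ : PW, Finsupp.single σ (1 : ℤ) =
    ∑ w ∈ permsOf σ.1.length, if weakLe σ.1 w then M w else 0

noncomputable def triangleSum (M : List ℕ → ZS) (w : List ℕ) : ZS ⊗[ℤ] ZS :=
  ∑ i ∈ Finset.range (w.length + 1), ∑ u ∈ permsOf i, ∑ v ∈ permsOf (w.length - i),
    if w = triangle v u then M u ⊗ₜ[ℤ] M v else 0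

variable {M : List ℕ → ZS}

lemma Delta_single (σ : PW) : Delta (Finsupp.single σ (1 : ℤ)) = deltaWord σ := by
  rw [Delta, Finsupp.lsum_single, LinearMap.toSpanSingleton_apply_one]

lemma Delta_single_eq_sum_weakLe_triangle (hM : IsMonomialBasis M) (σ : PW) :
    Delta (Finsupp.single σ (1 : ℤ)) =
      ∑ i ∈ Finset.range (σ.1.length + 1), ∑ u ∈ permsOf i, ∑ v ∈ permsOf (σ.1.length - i),
        if weakLe σ.1 (triangle v u) then M u ⊗ₜ[ℤ] M v else 0 := by
  rw [Delta_single, deltaWord]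
  refine Finset.sum_congr rfl fun i hi => ?_
  have hi : i ≤ σ.1.length := Nat.lt_succ_iff.1 (Finset.mem_range.1 hi)
  have hlow : (σ.1.filter (· < i)).length = i := by
    simpa using (filter_lt_perm_range σ.2 hi).length_eq
  have hhigh : (stW (σ.1.filter (i ≤ ·))).length = σ.1.length - i := by
    simpa [stW_filter_le σ.2] using (map_sub_filter_le_perm_range σ.2 i).length_eq
  rw [hM, hM]
  dsimp only
  rw [hlow, hhigh, TensorProduct.sum_tmul]
  refine Finset.sum_congr rfl fun u hu => ?_
  rw [TensorProduct.tmul_sum]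
  refine Finset.sum_congr rfl fun v hv => ?_
  rw [weakLe_triangle_iff σ.2 (mem_permsOf.1 hu) (mem_permsOf.1 hv)]
  split_ifs <;> simp_all

lemma sum_weakLe_triangleSum (M : List ℕ → ZS) (σ : List ℕ) (n : ℕ) :
    ∑ w ∈ permsOf n, (if weakLe σ w then triangleSum M w else 0) =
      ∑ i ∈ Finset.range (n + 1), ∑ u ∈ permsOf i, ∑ v ∈ permsOf (n - i),
        if weakLe σ (triangle v u) then M u ⊗ₜ[ℤ] M v else 0 := by
  rw [← Finset.sum_filter]
  calc ∑ w ∈ permsOf n with weakLe σ w, triangleSum M w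
      = ∑ w ∈ permsOf n with weakLe σ w, ∑ i ∈ Finset.range (n + 1), ∑ u ∈ permsOf i,
          ∑ v ∈ permsOf (n - i), if w = triangle v u then M u ⊗ₜ[ℤ] M v else 0 :=
        Finset.sum_congr rfl fun w hw => by
          rw [triangleSum, length_of_mem_permsOf (Finset.mem_filter.1 hw).1]
    _ = _ := by
        rw [Finset.sum_comm]
        refine Finset.sum_congr rfl fun i hi => ?_
        rw [Finset.sum_comm]
        refine Finset.sum_congr rfl fun u hu => ?_
        rw [Finset.sum_comm]
        refine Finset.sum_congr rfl fun v hv => ?_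
        have hmem : triangle v u ∈ permsOf n := by
          simpa [Nat.add_sub_cancel' (Nat.lt_succ_iff.1 (Finset.mem_range.1 hi))] using
            triangle_mem_permsOf hu hv
        simp only [Finset.sum_ite_eq', Finset.mem_filter, hmem, true_and]

lemma sum_weakLe_Delta_eq_sum_weakLe_triangleSum (hM : IsMonomialBasis M) (σ : PW) :
    ∑ w ∈ permsOf σ.1.length, (if weakLe σ.1 w then Delta (M w) else 0) =
      ∑ w ∈ permsOf σ.1.length, if weakLe σ.1 w then triangleSum M w else 0 := by
  rw [sum_weakLe_triangleSum, ← Delta_single_eq_sum_weakLe_triangle hM, hM σ, map_sum]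
  exact Finset.sum_congr rfl fun w _ => by split_ifs <;> simp

lemma Delta_monomial_eq_triangleSum (hM : IsMonomialBasis M) (σ : PW) :
    Delta (M σ.1) = triangleSum M σ.1 := by
  refine Finset.eq_of_forall_sum_Ici_eq (f := fun a : PermsOf σ.1.length => Delta (M a.1))
    (g := fun a => triangleSum M a.1) (fun a => ?_) ⟨σ.1, mem_permsOf.2 σ.2⟩
  have h := sum_weakLe_Delta_eq_sum_weakLe_triangleSum hM
    ⟨a.1, isPermWord_of_mem_permsOf a.2⟩
  dsimp only at h
  rw [length_of_mem_permsOf a.2] at h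
  exact (PermsOf.sum_Ici a _).trans (h.trans (PermsOf.sum_Ici a _).symm)

end MonomialBasis

open scoped Classical in
/-- Let `(M_σ)` be the monomial basis of `ℤS`, defined by
`σ = Σ_{σ ≤ w} M_w` (Möbius inversion over the right weak order).  Then
`δ(M_σ) = Σ_{σ = v △ u} M_u ⊗ M_v`, the sum over all factorizations of `σ`
as a left shifted concatenation. -/
theorem delta_monomial_basis (M : List ℕ → ZS)
    (hM : ∀ σ : PW, Finsupp.single σ (1 : ℤ) =
      ∑ w ∈ permsOf σ.1.length, if weakLe σ.1 w then M w else 0) :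
    ∀ σ : PW, Delta (M σ.1) =
      ∑ i ∈ Finset.range (σ.1.length + 1),
        ∑ u ∈ permsOf i, ∑ v ∈ permsOf (σ.1.length - i),
          if σ.1 = triangle v u then M u ⊗ₜ[ℤ] M v else 0 :=
  Delta_monomial_eq_triangleSum hM
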